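/- arXiv:1712.02552 — 7 statements merged into one kernel-verified Lean document; each statement's English description precedes it below -/
import Mathlib

section
/- Let there be M generators indexed by m = 1,…,M with fuel-cost increments C_{G,m}(P) = a_m P² + b_m P where a_m ≥ 0, b_m ≥ 0, and capacities P^max_{g,m} > 0; set A = max_m a_m, B = max_m b_m and P^max_g = max_m P^max_{g,m}. Let the ESM life-cycle cost increment be C_E(P) = a_lc P² with a_lc ≥ 0, ESM power bound P^max_e > 0, and weights ξ_e ≥ 0, ξ_l. If ξ_l > max(2 A P^max_g + B, 2 ξ_e a_lc P^max_e), then: (i) for every generator m and all reals P, P̂ with 0 ≤ P < P̂ ≤ P^max_{g,m}, one has ξ_l (P̂ − P) > (a_m P̂² + b_m P̂) − (a_m P² + b_m P); and (ii) for all reals Q, Q̂ with Q < Q̂ ≤ P^max_e, one has ξ_l (Q̂ − Q) > ξ_e a_lc (Q̂² − Q²). -/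
/-- Proposition 1: sufficient condition on the load-shedding penalty `ξl` so that
shedding a load amount always costs strictly more than the corresponding saving in
generation cost (i) or in ESM operating cost (ii). -/
theorem stmt_0
    (M : ℕ) (hM : 0 < M)
    (a b Pgmax : Fin M → ℝ)
    (ha : ∀ m, 0 ≤ a m) (hb : ∀ m, 0 ≤ b m) (hPgmax : ∀ m, 0 < Pgmax m)
    (A B Pg : ℝ)
    (hA : IsGreatest (Set.range a) A)
    (hB : IsGreatest (Set.range b) B)
    (hPg : IsGreatest (Set.range Pgmax) Pg)
    (alc : ℝ) (halc : 0 ≤ alc)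
    (Pemax : ℝ) (hPemax : 0 < Pemax)
    (ξe ξl : ℝ) (hξe : 0 ≤ ξe)
    (hξl : ξl > max (2 * A * Pg + B) (2 * ξe * alc * Pemax)) :
    (∀ m : Fin M, ∀ P Phat : ℝ, 0 ≤ P → P < Phat → Phat ≤ Pgmax m →
      ξl * (Phat - P) >
        (a m * Phat ^ 2 + b m * Phat) - (a m * P ^ 2 + b m * P)) ∧
    (∀ Q Qhat : ℝ, Q < Qhat → Qhat ≤ Pemax →
      ξl * (Qhat - Q) > ξe * alc * (Qhat ^ 2 - Q ^ 2)) := by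
  have h1 : ξl > 2 * A * Pg + B := lt_of_le_of_lt (le_max_left _ _) hξl
  have h2 : ξl > 2 * ξe * alc * Pemax := lt_of_le_of_lt (le_max_right _ _) hξl
  constructor
  · intro m P Phat hP hPPhat hPhat
    have haA : a m ≤ A := hA.2 (Set.mem_range_self m)
    have hbB : b m ≤ B := hB.2 (Set.mem_range_self m)
    have hPgm : Pgmax m ≤ Pg := hPg.2 (Set.mem_range_self m)
    have hA0 : 0 ≤ A := le_trans (ha m) haA
    nlinarith [mul_le_mul haA (by linarith : Phat + P ≤ 2 * Pg) (by linarith) hA0,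
      mul_pos (sub_pos.mpr hPPhat) (sub_pos.mpr hPPhat)]
  · intro Q Qhat hQ hQhat
    have hxa : 0 ≤ ξe * alc := mul_nonneg hξe halc
    nlinarith [mul_le_mul_of_nonneg_left (by linarith : Qhat + Q ≤ 2 * Pemax) hxa]
end

section
/- Fix an integer T ≥ 1 and reals α > 0, Δt > 0, β ≥ 1, bounds 0 ≤ lo ≤ hi, and a target distance D with T · (lo/α)^{1/β} · Δt < D. Define the feasible set S = { P : Fin T → ℝ | ∀ t, lo ≤ P t ≤ hi, and D ≤ Σ_t (P t / α)^{1/β} Δt }. Let f : (Fin T → ℝ) → ℝ be strictly increasing with respect to the pointwise order, i.e., whenever P ≤ Q pointwise and P ≠ Q then f(P) < f(Q). If P* ∈ S and f(P*) ≤ f(P) for all P ∈ S, then Σ_t (P* t / α)^{1/β} Δt = D, i.e., the relaxed travel-distance constraint is active at every optimal solution. -/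
/-- Theorem 1: the convex relaxation of the travel-distance constraint is exact — at any
optimal solution of the relaxed problem (the objective being strictly increasing in the
propulsion powers), the relaxed distance constraint holds with equality. -/
theorem stmt_2 (T : ℕ) (hT : 1 ≤ T) (α Δt β lo hi D : ℝ)
    (hα : 0 < α) (hΔt : 0 < Δt) (hβ : 1 ≤ β) (hlo : 0 ≤ lo) (hlohi : lo ≤ hi)
    (hD : (T : ℝ) * (lo / α) ^ (1 / β) * Δt < D)
    (S : Set (Fin T → ℝ))
    (hS : S = {P : Fin T → ℝ |
      (∀ t, lo ≤ P t ∧ P t ≤ hi) ∧ D ≤ ∑ t, (P t / α) ^ (1 / β) * Δt})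
    (f : (Fin T → ℝ) → ℝ)
    (hf : ∀ P Q : Fin T → ℝ, P ≤ Q → P ≠ Q → f P < f Q)
    (Pstar : Fin T → ℝ) (hPstar : Pstar ∈ S)
    (hopt : ∀ P ∈ S, f Pstar ≤ f P) :
    ∑ t, (Pstar t / α) ^ (1 / β) * Δt = D := by
  subst hS
  obtain ⟨hbd, hsum⟩ := hPstar
  by_contra hne
  have hβ0 : (0:ℝ) < β := lt_of_lt_of_le one_pos hβ
  set Ssum : ℝ := ∑ t, (Pstar t / α) ^ (1 / β) * Δt with hSsum
  have hlt : D < Ssum := lt_of_le_of_ne hsum (fun h => hne h.symm)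
  -- there exists a coordinate strictly above lo
  have hex : ∃ t0, lo < Pstar t0 := by
    by_contra hall
    push_neg at hall
    have heq : ∀ t, Pstar t = lo := fun t => le_antisymm (hall t) (hbd t).1
    have : Ssum = (T : ℝ) * (lo / α) ^ (1 / β) * Δt := by
      simp [hSsum, heq, Finset.sum_const, mul_assoc]
    linarith
  obtain ⟨t0, ht0⟩ := hex
  have hP0 : 0 ≤ Pstar t0 / α := div_nonneg (le_trans hlo ht0.le) hα.le
  have hlo0 : 0 ≤ lo / α := div_nonneg hlo hα.le
  have hrlo : (0:ℝ) ≤ (lo / α) ^ (1 / β) := Real.rpow_nonneg hlo0 _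
  have hcancel : 1 / β * β = 1 := one_div_mul_cancel hβ0.ne'
  set c : ℝ := (Pstar t0 / α) ^ (1 / β) - (Ssum - D) / Δt with hc
  have hclt : c < (Pstar t0 / α) ^ (1 / β) := by
    have : 0 < (Ssum - D) / Δt := div_pos (by linarith) hΔt
    simp only [hc]; linarith
  -- find x with lo ≤ x, x < Pstar t0, c ≤ (x/α)^(1/β)
  obtain ⟨x, hx1, hx2, hx3⟩ : ∃ x, lo ≤ x ∧ x < Pstar t0 ∧ c ≤ (x / α) ^ (1 / β) := by
    by_cases hcase : c ≤ (lo / α) ^ (1 / β)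
    · exact ⟨lo, le_refl _, ht0, hcase⟩
    · push_neg at hcase
      have hc0 : 0 ≤ c := le_trans hrlo hcase.le
      refine ⟨α * c ^ β, ?_, ?_, ?_⟩
      · have h1 : ((lo / α) ^ (1 / β)) ^ β < c ^ β :=
          Real.rpow_lt_rpow hrlo hcase hβ0
        have h2 : ((lo / α) ^ (1 / β)) ^ β = lo / α := by
          rw [← Real.rpow_mul hlo0, hcancel, Real.rpow_one]
        rw [h2, div_lt_iff₀ hα] at h1
        linarith
      · have h1 : c ^ β < ((Pstar t0 / α) ^ (1 / β)) ^ β :=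
          Real.rpow_lt_rpow hc0 hclt hβ0
        have h2 : ((Pstar t0 / α) ^ (1 / β)) ^ β = Pstar t0 / α := by
          rw [← Real.rpow_mul hP0, hcancel, Real.rpow_one]
        rw [h2, lt_div_iff₀ hα] at h1
        linarith
      · have : α * c ^ β / α = c ^ β := by field_simp
        rw [this, ← Real.rpow_mul hc0,
          mul_one_div_cancel hβ0.ne', Real.rpow_one]
  -- build the strictly smaller feasible point
  set Q : Fin T → ℝ := Function.update Pstar t0 x with hQ
  have hQle : Q ≤ Pstar := by
    intro t
    by_cases h : t = t0
    · subst h; simp [hQ, hx2.le]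
    · simp [hQ, Function.update_of_ne h]
  have hQne : Q ≠ Pstar := by
    intro h
    have := congrFun h t0
    simp [hQ] at this
    exact absurd this (ne_of_lt hx2)
  have hQsum : ∑ t, (Q t / α) ^ (1 / β) * Δt
      = Ssum - (Pstar t0 / α) ^ (1 / β) * Δt + (x / α) ^ (1 / β) * Δt := by
    have key : ∀ t, (Q t / α) ^ (1 / β) * Δt
        = Function.update (fun s => (Pstar s / α) ^ (1 / β) * Δt) t0
            ((x / α) ^ (1 / β) * Δt) t := by
      intro t
      by_cases h : t = t0
      · subst h; simp [hQ]
      · simp [hQ, Function.update_of_ne h]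
    rw [Finset.sum_congr rfl (fun t _ => key t),
      Finset.sum_update_of_mem (Finset.mem_univ t0), hSsum,
      ← Finset.sum_erase_add _ _ (Finset.mem_univ t0), Finset.sdiff_singleton_eq_erase]
    ring
  have hQS : Q ∈ {P : Fin T → ℝ |
      (∀ t, lo ≤ P t ∧ P t ≤ hi) ∧ D ≤ ∑ t, (P t / α) ^ (1 / β) * Δt} := by
    constructor
    · intro t
      by_cases h : t = t0
      · subst h; simp [hQ]
        exact ⟨hx1, le_trans hx2.le (hbd t).2⟩
      · simp [hQ, Function.update_of_ne h]; exact hbd t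
    · rw [hQsum]
      have : c * Δt ≤ (x / α) ^ (1 / β) * Δt :=
        mul_le_mul_of_nonneg_right hx3 hΔt.le
      have hc' : c * Δt = (Pstar t0 / α) ^ (1 / β) * Δt - (Ssum - D) := by
        simp only [hc]; field_simp
      linarith
  exact absurd (hopt Q hQS) (not_le.mpr (hf Q Pstar hQle hQne))
end

section
/- Let α > 0 and β > 1 be reals, and let P, P̂, P^max be reals with 0 < P < P̂ ≤ P^max. Then (P̂/α)^{1/β} − (P/α)^{1/β} > (1/(β α^{1/β})) · (P^max)^{(1/β) − 1} · (P̂ − P), where all powers are real powers (Real.rpow). -/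
/-!
Writing `r = 1 / β ∈ (0, 1)`, the left side is `(P̂ ^ r - P ^ r) / α ^ r`. Strict concavity of
`t ↦ t ^ r` puts the secant slope between `P` and `P̂` strictly above the derivative `r P̂ ^ (r - 1)`
at the right endpoint, and since `r - 1 < 0` this derivative is at least `r Pmax ^ (r - 1)`.
-/

open Real

theorem mul_rpow_sub_one_mul_sub_lt_rpow_sub_rpow {r x y M : ℝ} (hr₀ : 0 < r) (hr₁ : r < 1)
    (hx : 0 ≤ x) (hxy : x < y) (hyM : y ≤ M) :
    r * M ^ (r - 1) * (y - x) < y ^ r - x ^ r := by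
  have hy : 0 < y := hx.trans_lt hxy
  have hderiv_lt_slope : r * y ^ (r - 1) < slope (· ^ r) x y :=
    (strictConcaveOn_rpow hr₀ hr₁).lt_slope_of_hasDerivAt (Set.mem_Ici.2 hx)
      (Set.mem_Ici.2 hy.le) hxy (hasDerivAt_rpow_const (Or.inl hy.ne'))
  have hderiv_anti : M ^ (r - 1) ≤ y ^ (r - 1) :=
    rpow_le_rpow_of_nonpos hy hyM (by linarith)
  rw [slope_def_field, lt_div_iff₀ (sub_pos.2 hxy)] at hderiv_lt_slope
  calc r * M ^ (r - 1) * (y - x) ≤ r * y ^ (r - 1) * (y - x) := by gcongr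
    _ < y ^ r - x ^ r := hderiv_lt_slope

/-- Key estimate in the proof of Proposition 2: a lower bound on the speed increase
produced by a propulsion-power increase, via the mean value theorem and the fact that
`x ↦ x^(1/β - 1)` is strictly decreasing on `(0, ∞)` when `β > 1`. -/
theorem stmt_3 (α β P Phat Pmax : ℝ) (hα : 0 < α) (hβ : 1 < β)
    (hP : 0 < P) (hPPhat : P < Phat) (hPmax : Phat ≤ Pmax) :
    (Phat / α) ^ (1 / β) - (P / α) ^ (1 / β) >
      (1 / (β * α ^ (1 / β))) * Pmax ^ (1 / β - 1) * (Phat - P) := by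
  have hβ₀ : 0 < β := one_pos.trans hβ
  have hαr : 0 < α ^ (1 / β) := rpow_pos_of_pos hα _
  have hbound := mul_rpow_sub_one_mul_sub_lt_rpow_sub_rpow (one_div_pos.2 hβ₀)
    ((div_lt_one hβ₀).2 hβ) hP.le hPPhat hPmax
  rw [div_rpow hP.le hα.le, div_rpow (hP.trans hPPhat).le hα.le, ← sub_div, gt_iff_lt,
    lt_div_iff₀ hαr]
  calc 1 / (β * α ^ (1 / β)) * Pmax ^ (1 / β - 1) * (Phat - P) * α ^ (1 / β)
      = 1 / β * Pmax ^ (1 / β - 1) * (Phat - P) := by field_simp [hαr.ne']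
    _ < _ := hbound
end

section
/- Consider T time slots of length Δt > 0, M generators with cost increments C_{G,m}(P) = a_m P² + b_m P (a_m ≥ 0, b_m ≥ 0) and capacities P^max_{g,m} > 0, and N ESMs with cost increment C_E(P) = a_lc P² (a_lc ≥ 0), weights ξ_e ≥ 0 and ξ_l; set A = max_m a_m, B = max_m b_m, P^max_g = max_m P^max_{g,m}, and let P^max_e > 0 be the ESM power bound. Assume ξ_l > 2 A P^max_g + B and ξ_l > 2 ξ_e a_lc P^max_e. Let α > 0, β > 1 and P^max_PR > 0, and let two operating profiles be given: generator powers P_{g,m}(t), P̂_{g,m}(t) with 0 ≤ P_{g,m}(t) ≤ P̂_{g,m}(t) ≤ P^max_{g,m}; ESM powers P_{e,n}(t), P̂_{e,n}(t) with P_{e,n}(t) ≤ P̂_{e,n}(t) ≤ P^max_e; shed-power differences ΔP_no(t) ≥ 0; and propulsion powers with 0 < P_PR(t) ≤ P̂_PR(t) ≤ P^max_PR for all t, strict for at least one t, satisfying the power balance P̂_PR(t) − P_PR(t) = Σ_m (P̂_{g,m}(t) − P_{g,m}(t)) + Σ_n (P̂_{e,n}(t) − P_{e,n}(t)) + ΔP_no(t)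 for every t. If h > β α^{1/β} ξ_l / (P^max_PR)^{(1/β) − 1}, then h · Σ_t ((P̂_PR(t)/α)^{1/β} − (P_PR(t)/α)^{1/β}) Δt > Σ_t [ Σ_m (C_{G,m}(P̂_{g,m}(t)) − C_{G,m}(P_{g,m}(t))) + ξ_e Σ_n (C_E(P̂_{e,n}(t)) − C_E(P_{e,n}(t))) + ξ_l ΔP_no(t) ] Δt. -/
set_option maxHeartbeats 1000000 in
/-- Proposition 2 (first claim): under the sufficient condition (31) on the penalty `h`,
the increased distance penalty strictly exceeds the total operating-cost saving obtained
by reducing propulsion power (with the corresponding reduction of generation, ESM output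
and shed load by power balance). -/
theorem stmt_4 (T M N : ℕ) (Δt : ℝ) (hΔt : 0 < Δt)
    (a b Pgmax : Fin M → ℝ)
    (ha : ∀ m, 0 ≤ a m) (hb : ∀ m, 0 ≤ b m) (hPgmax : ∀ m, 0 < Pgmax m)
    (alc : ℝ) (halc : 0 ≤ alc)
    (ξe ξl : ℝ) (hξe : 0 ≤ ξe)
    (A B Pgm : ℝ)
    (hA : IsGreatest (Set.range a) A)
    (hB : IsGreatest (Set.range b) B)
    (hPgm : IsGreatest (Set.range Pgmax) Pgm)
    (Pemax : ℝ) (hPemax : 0 < Pemax)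
    (hξl1 : ξl > 2 * A * Pgm + B)
    (hξl2 : ξl > 2 * ξe * alc * Pemax)
    (α β PPRmax : ℝ) (hα : 0 < α) (hβ : 1 < β) (hPPRmax : 0 < PPRmax)
    (Pg Pghat : Fin M → Fin T → ℝ)
    (hPg : ∀ m t, 0 ≤ Pg m t ∧ Pg m t ≤ Pghat m t ∧ Pghat m t ≤ Pgmax m)
    (Pe Pehat : Fin N → Fin T → ℝ)
    (hPe : ∀ n t, Pe n t ≤ Pehat n t ∧ Pehat n t ≤ Pemax)
    (ΔPno : Fin T → ℝ) (hΔPno : ∀ t, 0 ≤ ΔPno t)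
    (PPR PPRhat : Fin T → ℝ)
    (hPPR : ∀ t, 0 < PPR t ∧ PPR t ≤ PPRhat t ∧ PPRhat t ≤ PPRmax)
    (hstrict : ∃ t, PPR t < PPRhat t)
    (hbal : ∀ t, PPRhat t - PPR t =
      (∑ m, (Pghat m t - Pg m t)) + (∑ n, (Pehat n t - Pe n t)) + ΔPno t)
    (h : ℝ) (hh : h > β * α ^ (1 / β) * ξl / PPRmax ^ (1 / β - 1)) :
    h * ∑ t, ((PPRhat t / α) ^ (1 / β) - (PPR t / α) ^ (1 / β)) * Δt >
      ∑ t, ((∑ m, ((a m * (Pghat m t) ^ 2 + b m * Pghat m t)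
                 - (a m * (Pg m t) ^ 2 + b m * Pg m t)))
          + ξe * (∑ n, (alc * (Pehat n t) ^ 2 - alc * (Pe n t) ^ 2))
          + ξl * ΔPno t) * Δt := by
  have hβ0 : (0:ℝ) < β := by linarith
  set γ : ℝ := 1 / β with hγdef
  have hγ0 : 0 < γ := by positivity
  have hγ1 : γ < 1 := by rw [hγdef, div_lt_one hβ0]; exact hβ
  obtain ⟨mA, hmA⟩ := hA.1
  obtain ⟨mB, hmB⟩ := hB.1
  obtain ⟨mP, hmP⟩ := hPgm.1
  have hA0 : 0 ≤ A := hmA ▸ ha mA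
  have hB0 : 0 ≤ B := hmB ▸ hb mB
  have hPgm0 : 0 < Pgm := hmP ▸ hPgmax mP
  have hξl0 : 0 < ξl := by nlinarith
  have hαγ : 0 < α ^ γ := Real.rpow_pos_of_pos hα γ
  have hD : 0 < PPRmax ^ (γ - 1) := Real.rpow_pos_of_pos hPPRmax _
  set c : ℝ := γ * PPRmax ^ (γ - 1) / α ^ γ with hcdef
  have hc0 : 0 < c := by rw [hcdef]; positivity
  have hξlc : ξl < h * c := by
    have h2 : β * α ^ γ * ξl / PPRmax ^ (γ - 1) * c = ξl := by
      rw [hcdef, hγdef]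
      field_simp
    calc ξl = β * α ^ γ * ξl / PPRmax ^ (γ - 1) * c := h2.symm
      _ < h * c := mul_lt_mul_of_pos_right hh hc0
  have hh0 : 0 < h := by
    have : 0 < β * α ^ γ * ξl / PPRmax ^ (γ - 1) := by positivity
    linarith
  -- key concavity inequality per time slot
  have key : ∀ t : Fin T, c * (PPRhat t - PPR t) ≤
      (PPRhat t / α) ^ γ - (PPR t / α) ^ γ := by
    intro t
    obtain ⟨hp0, hpq, hqm⟩ := hPPR t
    set p := PPR t with hpdef
    set q := PPRhat t with hqdef
    have hq0 : 0 < q := lt_of_lt_of_le hp0 hpq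
    have hs : (-1:ℝ) ≤ p / q - 1 := by
      have : 0 < p / q := div_pos hp0 hq0
      linarith
    have hbern : (p / q) ^ γ ≤ 1 + γ * (p / q - 1) := by
      have hb1 := rpow_one_add_le_one_add_mul_self hs hγ0.le hγ1.le
      have he : 1 + (p / q - 1) = p / q := by ring
      rwa [he] at hb1
    have hqγ : 0 < q ^ γ := Real.rpow_pos_of_pos hq0 γ
    have hdiv : p ^ γ / q ^ γ ≤ 1 + γ * (p / q - 1) := by
      rwa [Real.div_rpow hp0.le hq0.le] at hbern
    have hple : p ^ γ ≤ (1 + γ * (p / q - 1)) * q ^ γ := (div_le_iff₀ hqγ).mp hdiv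
    have e2 : (1 + γ * (p / q - 1)) * q ^ γ = q ^ γ - γ * (q ^ γ / q) * (q - p) := by
      field_simp
      ring
    have hq1 : q ^ (γ - 1) = q ^ γ / q := by rw [Real.rpow_sub hq0, Real.rpow_one]
    have step1 : γ * q ^ (γ - 1) * (q - p) ≤ q ^ γ - p ^ γ := by
      rw [hq1]; rw [e2] at hple; linarith
    have step2 : PPRmax ^ (γ - 1) ≤ q ^ (γ - 1) :=
      Real.rpow_le_rpow_of_nonpos hq0 hqm (by linarith)
    have step3 : γ * PPRmax ^ (γ - 1) * (q - p) ≤ γ * q ^ (γ - 1) * (q - p) := by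
      have hδ : 0 ≤ q - p := by linarith
      nlinarith [mul_nonneg (mul_nonneg hγ0.le hδ) (sub_nonneg.2 step2)]
    have main1 : γ * PPRmax ^ (γ - 1) * (q - p) ≤ q ^ γ - p ^ γ := step3.trans step1
    rw [Real.div_rpow hp0.le hα.le, Real.div_rpow hq0.le hα.le, hcdef]
    rw [div_mul_eq_mul_div, ← sub_div]
    exact div_le_div_of_nonneg_right main1 hαγ.le
  -- cost bound per time slot
  have costb : ∀ t : Fin T,
      ((∑ m, ((a m * (Pghat m t) ^ 2 + b m * Pghat m t)
                 - (a m * (Pg m t) ^ 2 + b m * Pg m t)))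
          + ξe * (∑ n, (alc * (Pehat n t) ^ 2 - alc * (Pe n t) ^ 2))
          + ξl * ΔPno t) ≤ ξl * (PPRhat t - PPR t) := by
    intro t
    have hgsum : (∑ m, ((a m * (Pghat m t) ^ 2 + b m * Pghat m t)
                 - (a m * (Pg m t) ^ 2 + b m * Pg m t)))
        ≤ ξl * ∑ m, (Pghat m t - Pg m t) := by
      rw [Finset.mul_sum]
      apply Finset.sum_le_sum
      intro m _
      obtain ⟨hm1, hm2, hm3⟩ := hPg m t
      have ham : a m ≤ A := hA.2 ⟨m, rfl⟩
      have hbm : b m ≤ B := hB.2 ⟨m, rfl⟩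
      have hPm : Pgmax m ≤ Pgm := hPgm.2 ⟨m, rfl⟩
      have hS0 : 0 ≤ Pghat m t + Pg m t := by linarith
      have h4 : Pghat m t + Pg m t ≤ 2 * Pgm := by linarith
      have h5 : a m * (Pghat m t + Pg m t) ≤ A * (2 * Pgm) :=
        (mul_le_mul_of_nonneg_right ham hS0).trans (mul_le_mul_of_nonneg_left h4 hA0)
      have h6 : a m * (Pghat m t + Pg m t) + b m ≤ ξl := by linarith
      have h7 : 0 ≤ (Pghat m t - Pg m t) * (ξl - (a m * (Pghat m t + Pg m t) + b m)) :=
        mul_nonneg (by linarith) (by linarith)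
      nlinarith [h7]
    have hesum : ξe * (∑ n, (alc * (Pehat n t) ^ 2 - alc * (Pe n t) ^ 2))
        ≤ ξl * ∑ n, (Pehat n t - Pe n t) := by
      rw [Finset.mul_sum, Finset.mul_sum]
      apply Finset.sum_le_sum
      intro n _
      obtain ⟨hn1, hn2⟩ := hPe n t
      have h8 : 0 ≤ ξe * alc * (Pehat n t - Pe n t) :=
        mul_nonneg (mul_nonneg hξe halc) (by linarith)
      have h9 : Pehat n t + Pe n t ≤ 2 * Pemax := by linarith
      nlinarith [mul_le_mul_of_nonneg_left h9 h8,
        mul_nonneg (sub_nonneg.2 hn1) (sub_nonneg.2 hξl2.le)]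
    rw [hbal t]
    have := hΔPno t
    calc _ ≤ ξl * (∑ m, (Pghat m t - Pg m t)) + ξl * (∑ n, (Pehat n t - Pe n t))
          + ξl * ΔPno t := by linarith
      _ = ξl * ((∑ m, (Pghat m t - Pg m t)) + (∑ n, (Pehat n t - Pe n t)) + ΔPno t) := by ring
  -- per-slot comparison
  have main : ∀ t : Fin T,
      ((∑ m, ((a m * (Pghat m t) ^ 2 + b m * Pghat m t)
                 - (a m * (Pg m t) ^ 2 + b m * Pg m t)))
          + ξe * (∑ n, (alc * (Pehat n t) ^ 2 - alc * (Pe n t) ^ 2))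
          + ξl * ΔPno t) * Δt
        ≤ h * (((PPRhat t / α) ^ γ - (PPR t / α) ^ γ) * Δt) := by
    intro t
    have h1 := costb t
    have h2 := key t
    have hδ : 0 ≤ PPRhat t - PPR t := sub_nonneg.2 (hPPR t).2.1
    have h3 : ξl * (PPRhat t - PPR t) ≤ h * c * (PPRhat t - PPR t) :=
      mul_le_mul_of_nonneg_right hξlc.le hδ
    have h4 : h * (c * (PPRhat t - PPR t)) ≤
        h * ((PPRhat t / α) ^ γ - (PPR t / α) ^ γ) :=
      mul_le_mul_of_nonneg_left h2 hh0.le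
    have h5 : ((∑ m, ((a m * (Pghat m t) ^ 2 + b m * Pghat m t)
                 - (a m * (Pg m t) ^ 2 + b m * Pg m t)))
          + ξe * (∑ n, (alc * (Pehat n t) ^ 2 - alc * (Pe n t) ^ 2))
          + ξl * ΔPno t) ≤ h * ((PPRhat t / α) ^ γ - (PPR t / α) ^ γ) := by
      linarith [h1, h3, h4]
    calc _ ≤ (h * ((PPRhat t / α) ^ γ - (PPR t / α) ^ γ)) * Δt :=
          mul_le_mul_of_nonneg_right h5 hΔt.le
      _ = h * (((PPRhat t / α) ^ γ - (PPR t / α) ^ γ) * Δt) := by ring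
  obtain ⟨t₀, ht₀⟩ := hstrict
  have mainstrict :
      ((∑ m, ((a m * (Pghat m t₀) ^ 2 + b m * Pghat m t₀)
                 - (a m * (Pg m t₀) ^ 2 + b m * Pg m t₀)))
          + ξe * (∑ n, (alc * (Pehat n t₀) ^ 2 - alc * (Pe n t₀) ^ 2))
          + ξl * ΔPno t₀) * Δt
        < h * (((PPRhat t₀ / α) ^ γ - (PPR t₀ / α) ^ γ) * Δt) := by
    have h1 := costb t₀
    have h2 := key t₀
    have hδ : 0 < PPRhat t₀ - PPR t₀ := sub_pos.2 ht₀
    have h3 : ξl * (PPRhat t₀ - PPR t₀) < h * c * (PPRhat t₀ - PPR t₀) :=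
      mul_lt_mul_of_pos_right hξlc hδ
    have h4 : h * (c * (PPRhat t₀ - PPR t₀)) ≤
        h * ((PPRhat t₀ / α) ^ γ - (PPR t₀ / α) ^ γ) :=
      mul_le_mul_of_nonneg_left h2 hh0.le
    have h5 : ((∑ m, ((a m * (Pghat m t₀) ^ 2 + b m * Pghat m t₀)
                 - (a m * (Pg m t₀) ^ 2 + b m * Pg m t₀)))
          + ξe * (∑ n, (alc * (Pehat n t₀) ^ 2 - alc * (Pe n t₀) ^ 2))
          + ξl * ΔPno t₀) < h * ((PPRhat t₀ / α) ^ γ - (PPR t₀ / α) ^ γ) := by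
      linarith [h1, h3, h4]
    calc _ < (h * ((PPRhat t₀ / α) ^ γ - (PPR t₀ / α) ^ γ)) * Δt :=
          mul_lt_mul_of_pos_right h5 hΔt
      _ = h * (((PPRhat t₀ / α) ^ γ - (PPR t₀ / α) ^ γ) * Δt) := by ring
  calc (∑ t, ((∑ m, ((a m * (Pghat m t) ^ 2 + b m * Pghat m t)
                 - (a m * (Pg m t) ^ 2 + b m * Pg m t)))
          + ξe * (∑ n, (alc * (Pehat n t) ^ 2 - alc * (Pe n t) ^ 2))
          + ξl * ΔPno t) * Δt)
      < ∑ t, h * (((PPRhat t / α) ^ γ - (PPR t / α) ^ γ) * Δt) :=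
        Finset.sum_lt_sum (fun t _ => main t) ⟨t₀, Finset.mem_univ _, mainstrict⟩
    _ = h * ∑ t, ((PPRhat t / α) ^ γ - (PPR t / α) ^ γ) * Δt := (Finset.mul_sum _ _ _).symm
end

section
/- Consider T time slots of length Δt > 0, M generators with cost increments C_{G,m}(P) = a_m P² + b_m P (a_m ≥ 0, b_m ≥ 0) and capacities P^max_{g,m} > 0, and N ESMs with cost increment C_E(P) = a_lc P² (a_lc ≥ 0), weights ξ_e ≥ 0 and ξ_l; set A = max_m a_m, B = max_m b_m, P^max_g = max_m P^max_{g,m}, and let P^max_e > 0 be the ESM power bound. Assume ξ_l > 2 A P^max_g + B and ξ_l > 2 ξ_e a_lc P^max_e. Let generator powers satisfy 0 ≤ P_{g,m}(t) ≤ P̂_{g,m}(t) ≤ P^max_{g,m}, ESM powers satisfy P_{e,n}(t) ≤ P̂_{e,n}(t) ≤ P^max_e, and shed-power differences satisfy ΔP_no(t) ≥ 0. Then the total cost difference ΔC := Σ_t [ Σ_m (C_{G,m}(P̂_{g,m}(t)) − C_{G,m}(P_{g,m}(t))) + ξ_e Σ_n (C_E(P̂_{e,n}(t)) − C_E(P_{e,n}(t)))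 + ξ_l ΔP_no(t) ] Δt satisfies ΔC ≤ ξ_l Σ_t [ Σ_m (P̂_{g,m}(t) − P_{g,m}(t)) + Σ_n (P̂_{e,n}(t) − P_{e,n}(t)) + ΔP_no(t) ] Δt. -/
/-- Intermediate estimate (53) in the proof of Proposition 2: the total operating-cost
decrease obtained by reducing generator outputs, ESM outputs and shed load is at most
`ξl` times the total power reduction. -/
theorem stmt_5 (T M N : ℕ) (Δt : ℝ) (hΔt : 0 < Δt)
    (a b Pgmax : Fin M → ℝ)
    (ha : ∀ m, 0 ≤ a m) (hb : ∀ m, 0 ≤ b m) (hPgmax : ∀ m, 0 < Pgmax m)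
    (alc : ℝ) (halc : 0 ≤ alc)
    (ξe ξl : ℝ) (hξe : 0 ≤ ξe)
    (A B Pgm : ℝ)
    (hA : IsGreatest (Set.range a) A)
    (hB : IsGreatest (Set.range b) B)
    (hPgm : IsGreatest (Set.range Pgmax) Pgm)
    (Pemax : ℝ) (hPemax : 0 < Pemax)
    (hξl1 : ξl > 2 * A * Pgm + B)
    (hξl2 : ξl > 2 * ξe * alc * Pemax)
    (Pg Pghat : Fin M → Fin T → ℝ)
    (hPg : ∀ m t, 0 ≤ Pg m t ∧ Pg m t ≤ Pghat m t ∧ Pghat m t ≤ Pgmax m)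
    (Pe Pehat : Fin N → Fin T → ℝ)
    (hPe : ∀ n t, Pe n t ≤ Pehat n t ∧ Pehat n t ≤ Pemax)
    (ΔPno : Fin T → ℝ) (hΔPno : ∀ t, 0 ≤ ΔPno t) :
    ∑ t, ((∑ m, ((a m * (Pghat m t) ^ 2 + b m * Pghat m t)
               - (a m * (Pg m t) ^ 2 + b m * Pg m t)))
        + ξe * (∑ n, (alc * (Pehat n t) ^ 2 - alc * (Pe n t) ^ 2))
        + ξl * ΔPno t) * Δt ≤
      ξl * ∑ t, ((∑ m, (Pghat m t - Pg m t)) + (∑ n, (Pehat n t - Pe n t)) + ΔPno t) * Δt := by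
  rw [Finset.mul_sum]
  apply Finset.sum_le_sum
  intro t _
  rw [← mul_assoc]
  apply mul_le_mul_of_nonneg_right _ hΔt.le
  have hGen : ∀ m, (a m * (Pghat m t) ^ 2 + b m * Pghat m t)
               - (a m * (Pg m t) ^ 2 + b m * Pg m t) ≤ ξl * (Pghat m t - Pg m t) := by
    intro m
    obtain ⟨h0, h1, h2⟩ := hPg m t
    have hAm : a m ≤ A := hA.2 ⟨m, rfl⟩
    have hBm : b m ≤ B := hB.2 ⟨m, rfl⟩
    have hPm : Pgmax m ≤ Pgm := hPgm.2 ⟨m, rfl⟩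
    have hPgm0 : 0 < Pgm := (hPgmax m).trans_le hPm
    have hA0 : 0 ≤ A := (ha m).trans hAm
    have hsum : Pghat m t + Pg m t ≤ 2 * Pgmax m := by linarith
    have hap : a m * Pgmax m ≤ A * Pgm := mul_le_mul hAm hPm (hPgmax m).le hA0
    nlinarith [mul_nonneg (sub_nonneg.2 h1) (sub_nonneg.2 hap),
      mul_nonneg (mul_nonneg (ha m) (sub_nonneg.2 h1)) (sub_nonneg.2 hsum),
      mul_nonneg (sub_nonneg.2 h1) (sub_nonneg.2 hBm),
      mul_nonneg (sub_nonneg.2 h1) (sub_nonneg.2 hξl1.le)]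
  have hE : ∀ n, ξe * (alc * (Pehat n t) ^ 2 - alc * (Pe n t) ^ 2)
      ≤ ξl * (Pehat n t - Pe n t) := by
    intro n
    obtain ⟨h1, h2⟩ := hPe n t
    have h3 : Pe n t ≤ Pemax := h1.trans h2
    nlinarith [mul_nonneg (mul_nonneg hξe halc) (mul_nonneg (sub_nonneg.2 h1) (sub_nonneg.2 h2)),
      mul_nonneg (mul_nonneg hξe halc) (mul_nonneg (sub_nonneg.2 h1) (sub_nonneg.2 h3)),
      mul_nonneg (sub_nonneg.2 h1) (sub_nonneg.2 hξl2.le)]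
  calc (∑ m, ((a m * (Pghat m t) ^ 2 + b m * Pghat m t)
               - (a m * (Pg m t) ^ 2 + b m * Pg m t)))
        + ξe * (∑ n, (alc * (Pehat n t) ^ 2 - alc * (Pe n t) ^ 2))
        + ξl * ΔPno t
      ≤ (∑ m, ξl * (Pghat m t - Pg m t)) + (∑ n, ξl * (Pehat n t - Pe n t)) + ξl * ΔPno t := by
        gcongr ?_ + ?_ + _
        · exact Finset.sum_le_sum fun m _ => hGen m
        · rw [Finset.mul_sum]; exact Finset.sum_le_sum fun n _ => hE n
    _ = ξl * ((∑ m, (Pghat m t - Pg m t)) + (∑ n, (Pehat n t - Pe n t)) + ΔPno t) := by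
        rw [← Finset.mul_sum, ← Finset.mul_sum]; ring
end

section
/- Let a ≥ 0, b and c ≥ 0, α > 0 and β ≥ 1 be reals. The function f : ℝ × ℝ → ℝ defined by f(x, y) = a x² + b x − c (y/α)^{1/β} (real power, Real.rpow) is convex on the set ℝ × { y : ℝ | 0 ≤ y }. -/
open Set

lemma ConvexOn.add_prod {𝕜 E F β : Type*} [Semiring 𝕜] [PartialOrder 𝕜]
    [AddCommMonoid E] [AddCommMonoid F] [AddCommMonoid β] [PartialOrder β]
    [IsOrderedAddMonoid β] [Module 𝕜 E] [Module 𝕜 F] [DistribMulAction 𝕜 β]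
    {s : Set E} {t : Set F} {f : E → β} {g : F → β}
    (hf : ConvexOn 𝕜 s f) (hg : ConvexOn 𝕜 t g) :
    ConvexOn 𝕜 (s ×ˢ t) (fun p => f p.1 + g p.2) :=
  ((hf.comp_linearMap (LinearMap.fst 𝕜 E F)).subset (fun _ hp => hp.1) (hf.1.prod hg.1)).add
    ((hg.comp_linearMap (LinearMap.snd 𝕜 E F)).subset (fun _ hp => hp.2) (hf.1.prod hg.1))

lemma Real.convexOn_quadratic {a : ℝ} (ha : 0 ≤ a) (b : ℝ) :
    ConvexOn ℝ univ (fun x : ℝ => a * x ^ 2 + b * x) :=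
  ((Even.convexOn_pow even_two).smul ha).add ((LinearMap.mul ℝ ℝ b).convexOn convex_univ)

lemma Real.concaveOn_const_mul_rpow_div {c α p : ℝ} (hc : 0 ≤ c) (hα : 0 < α)
    (hp₀ : 0 ≤ p) (hp₁ : p ≤ 1) :
    ConcaveOn ℝ (Ici 0) (fun y : ℝ => c * (y / α) ^ p) := by
  have h := ((Real.concaveOn_rpow hp₀ hp₁).smul hc).comp_linearMap (α⁻¹ • LinearMap.id)
  refine h.subset (fun y (hy : 0 ≤ y) => ?_) (convex_Ici 0) |>.congr fun y _ => ?_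
  · simp only [mem_preimage, LinearMap.smul_apply, LinearMap.id_apply, smul_eq_mul, mem_Ici]
    positivity
  · simp [div_eq_inv_mul]

/-- Convexity of the transformed EEOI constraint: the map
`(x, y) ↦ a x² + b x - c (y/α)^(1/β)` is convex on `ℝ × {y | 0 ≤ y}`. -/
theorem stmt_8 (a b c α β : ℝ) (ha : 0 ≤ a) (hc : 0 ≤ c) (hα : 0 < α) (hβ : 1 ≤ β) :
    ConvexOn ℝ ((Set.univ : Set ℝ) ×ˢ {y : ℝ | 0 ≤ y})
      (fun p : ℝ × ℝ => a * p.1 ^ 2 + b * p.1 - c * (p.2 / α) ^ (1 / β)) := by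
  have hp₀ : 0 ≤ 1 / β := by positivity
  have hp₁ : 1 / β ≤ 1 := div_le_one_of_le₀ hβ (by positivity)
  have h := (Real.convexOn_quadratic ha b).add_prod
    (Real.concaveOn_const_mul_rpow_div hc hα hp₀ hp₁).neg
  simp only [Pi.neg_apply, ← sub_eq_add_neg] at h
  exact h
end

section
/- Let T be a natural number and α > 0, Δt > 0, β ≥ 1, lo ≥ 0 and D be reals. Let P : Fin T → ℝ satisfy P t > lo for every t and Σ_t (P t / α)^{1/β} Δt > D (real powers, Real.rpow). Then there exists ε > 0 such that for every t, lo ≤ P t − ε, and Σ_t ((P t − ε)/α)^{1/β} Δt ≥ D. -/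
/-- Perturbation lemma used in Appendix B to prove Theorem 1: a propulsion profile
strictly above its lower bound whose travelled distance strictly exceeds `D` can be
uniformly decreased by some `ε > 0` while remaining feasible for the relaxed
travel constraint. -/
theorem stmt_10 (T : ℕ) (α Δt β lo D : ℝ)
    (hα : 0 < α) (hΔt : 0 < Δt) (hβ : 1 ≤ β) (hlo : 0 ≤ lo)
    (P : Fin T → ℝ) (hP : ∀ t, lo < P t)
    (hdist : D < ∑ t, (P t / α) ^ (1 / β) * Δt) :
    ∃ ε : ℝ, 0 < ε ∧ (∀ t, lo ≤ P t - ε) ∧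
      D ≤ ∑ t, ((P t - ε) / α) ^ (1 / β) * Δt := by
  rcases Nat.eq_zero_or_pos T with hT | hT
  · subst hT
    refine ⟨1, one_pos, fun t => t.elim0, ?_⟩
    simpa using hdist.le
  · have hβ0 : (0:ℝ) ≤ 1 / β := by positivity
    have hcont : Continuous (fun ε : ℝ => ∑ t, ((P t - ε) / α) ^ (1 / β) * Δt) := by
      apply continuous_finset_sum
      intro t _
      apply Continuous.mul _ continuous_const
      have h2 : Continuous (fun x : ℝ => x ^ (1 / β)) :=
        continuous_iff_continuousAt.mpr fun x =>
          Real.continuousAt_rpow_const x _ (Or.inr hβ0)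
      exact h2.comp (by continuity)
    set f : ℝ → ℝ := fun ε : ℝ => ∑ t, ((P t - ε) / α) ^ (1 / β) * Δt with hf
    have h0 : f 0 = ∑ t, (P t / α) ^ (1 / β) * Δt := by simp [hf]
    have hopen : IsOpen (f ⁻¹' Set.Ioi D) := (isOpen_Ioi).preimage hcont
    have h0mem : (0:ℝ) ∈ f ⁻¹' Set.Ioi D := by simp only [Set.mem_preimage, Set.mem_Ioi, h0]; exact hdist
    rcases Metric.isOpen_iff.mp hopen 0 h0mem with ⟨δ, hδ, hball⟩
    have hne : (Finset.univ : Finset (Fin T)).Nonempty := by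
      simpa [Finset.univ_nonempty_iff] using Fin.pos_iff_nonempty.mp hT
    set m : ℝ := Finset.univ.inf' hne (fun t => P t - lo) with hm
    have hmpos : 0 < m := by
      rw [hm, Finset.lt_inf'_iff]
      exact fun t _ => sub_pos.mpr (hP t)
    refine ⟨min (δ/2) m, lt_min (by linarith) hmpos, ?_, ?_⟩
    · intro t
      have : m ≤ P t - lo := Finset.inf'_le _ (Finset.mem_univ t)
      have := min_le_right (δ/2) m
      linarith
    · have hmem : min (δ/2) m ∈ Metric.ball (0:ℝ) δ := by
        rw [Metric.mem_ball, Real.dist_eq]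
        have h1 : min (δ/2) m ≤ δ/2 := min_le_left _ _
        have h2 : 0 < min (δ/2) m := lt_min (by linarith) hmpos
        rw [abs_of_pos (by linarith)]
        linarith
      have := hball hmem
      exact (Set.mem_Ioi.mp this).le
end
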